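/- There is a universal constant c > 0 such that the following holds. Let X₁, …, Xₙ ∈ ℝ^d be κ-friendly (with corruption parameter ε), where εn ≤ d. Let B ⊆ {1, …, n} be any subset of size εn, and let R = Σ_{i∈B} X_i. Then for any subset B′ ⊆ B of size k ≤ εn, |Σ_{i∈B′} ⟨X_i, R⟩ − k·d| ≤ c·κ·εn·√(kd). -/

import Mathlib

/-!
Split `∑_{i∈B'} ⟨Xᵢ, R⟩ - kd` into the diagonal part `∑_{i∈B'} (‖Xᵢ‖² - d)`, the off-diagonal
part `∑_{i≠j∈B'} ⟨Xᵢ, Xⱼ⟩` and the cross term `⟨∑_{B'} Xᵢ, ∑_{B∖B'} Xⱼ⟩`. The diagonal part is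
controlled by friendliness condition (3) and the cross term by condition (1). Condition (1) only
bounds inner products of sums over *disjoint* sets, so the off-diagonal part is decoupled:
averaging `⟨∑_S Xᵢ, ∑_{B'∖S} Xⱼ⟩` over all `S ⊆ B'` counts every ordered pair `i ≠ j` exactly
`2^(k-2)` times out of `2^k` subsets, which costs a factor 4. Since `εn ≤ d`, the maximum in (1)
is `√(εnd)`, and each of the three bounds is at most a multiple of `κ·εn·√(kd)`.
-/

open scoped RealInnerProductSpace

/-- A dataset `X₁, …, Xₙ ∈ ℝ^d` is `κ`-friendly (with corruption parameter `ε`) if: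
(1) for all disjoint subsets `S, T ⊆ {1, …, n}` of sizes `≤ εn`,
`|⟨Σ_{i∈S} Xᵢ, Σ_{i∈T} Xᵢ⟩| ≤ κ·√(|S||T|)·max(√(εnd), εn)`;
(2) for all distinct `i ≠ j`, `|⟨Xᵢ, Xⱼ⟩| ≤ κ·√d`;
(3) for all `i`, `|‖Xᵢ‖² − d| ≤ κ·√d`. -/
def Friendly (d n : ℕ) (ε κ : ℝ) (X : Fin n → EuclideanSpace ℝ (Fin d)) : Prop :=
  (∀ S T : Finset (Fin n), Disjoint S T →
      (S.card : ℝ) ≤ ε * n → (T.card : ℝ) ≤ ε * n →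
      |⟪∑ i ∈ S, X i, ∑ i ∈ T, X i⟫| ≤
        κ * (Real.sqrt (S.card * T.card) * max (Real.sqrt (ε * n * d)) (ε * n))) ∧
  (∀ i j : Fin n, i ≠ j → |⟪X i, X j⟫| ≤ κ * Real.sqrt d) ∧
  (∀ i : Fin n, |‖X i‖ ^ 2 - (d : ℝ)| ≤ κ * Real.sqrt d)

open Finset

theorem card_filter_powerset_mem_notMem {α : Type*} [DecidableEq α] {A : Finset α} {i j : α}
    (hi : i ∈ A) (hj : j ∈ A) (hij : i ≠ j) :
    #{S ∈ A.powerset | i ∈ S ∧ j ∉ S} = 2 ^ (#A - 2) := by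
  have himage :
      {S ∈ A.powerset | i ∈ S ∧ j ∉ S} = ((A.erase i).erase j).powerset.image (insert i) := by
    ext S
    simp only [mem_filter, mem_powerset, mem_image]
    constructor
    · rintro ⟨hSA, hiS, hjS⟩
      refine ⟨S.erase i, ?_, insert_erase hiS⟩
      intro x hx
      simp only [mem_erase] at hx ⊢
      exact ⟨fun h => hjS (h ▸ hx.2), hx.1, hSA hx.2⟩
    · rintro ⟨T, hT, rfl⟩
      refine ⟨insert_subset hi ((hT.trans (erase_subset _ _)).trans (erase_subset _ _)),
        mem_insert_self _ _, ?_⟩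
      rw [mem_insert, not_or]
      exact ⟨hij.symm, fun h => by simpa using hT h⟩
  rw [himage, card_image_of_injOn, card_powerset,
    card_erase_of_mem (mem_erase.mpr ⟨hij.symm, hj⟩), card_erase_of_mem hi]
  · rfl
  intro S hS T hT hST
  simp only [coe_powerset, Set.mem_preimage, Set.mem_powerset_iff, coe_subset] at hS hT
  have hiS : i ∉ S := fun h => by simpa using hS h
  have hiT : i ∉ T := fun h => by simpa using hT h
  rw [← erase_insert hiS, ← erase_insert hiT]
  exact congrArg (·.erase i) hST

theorem sum_powerset_sum_sum_sdiff {α M : Type*} [DecidableEq α] [AddCommMonoid M]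
    (A : Finset α) (b : α → α → M) :
    ∑ S ∈ A.powerset, ∑ i ∈ S, ∑ j ∈ A \ S, b i j =
      2 ^ (#A - 2) • ∑ i ∈ A, ∑ j ∈ A.erase i, b i j := by
  have hindicator : ∀ S ∈ A.powerset, ∑ i ∈ S, ∑ j ∈ A \ S, b i j =
      ∑ i ∈ A, ∑ j ∈ A, if i ∈ S ∧ j ∉ S then b i j else 0 := by
    intro S hS
    calc ∑ i ∈ S, ∑ j ∈ A \ S, b i j = ∑ i ∈ A with i ∈ S, ∑ j ∈ A with j ∉ S, b i j := by
          rw [filter_mem_eq_inter, inter_eq_right.mpr (mem_powerset.mp hS), sdiff_eq_filter]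
      _ = _ := by simp only [sum_filter, ite_and, sum_ite_irrel, sum_const_zero]
  have hcount : ∀ i ∈ A, ∀ j ∈ A,
      (∑ S ∈ A.powerset, if i ∈ S ∧ j ∉ S then b i j else 0) =
        if j = i then 0 else 2 ^ (#A - 2) • b i j := by
    intro i hi j hj
    rw [← sum_filter, sum_const]
    split_ifs with hji
    · subst hji
      simp
    · rw [card_filter_powerset_mem_notMem hi hj (Ne.symm hji)]
  rw [sum_congr rfl hindicator, sum_comm, smul_sum]
  refine sum_congr rfl fun i hi => ?_
  rw [sum_comm, sum_congr rfl (hcount i hi), ← sum_erase A (a := i) (by simp), smul_sum]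
  exact sum_congr rfl fun j hj => if_neg (ne_of_mem_erase hj)

section InnerProductSpace

variable {ι E : Type*} [DecidableEq ι] [NormedAddCommGroup E] [InnerProductSpace ℝ E]

theorem sum_powerset_inner_sum_sdiff (x : ι → E) (A : Finset ι) :
    ∑ S ∈ A.powerset, ⟪∑ i ∈ S, x i, ∑ j ∈ A \ S, x j⟫ =
      (2 : ℝ) ^ (#A - 2) * ∑ i ∈ A, ∑ j ∈ A.erase i, ⟪x i, x j⟫ := by
  simp_rw [sum_inner, inner_sum]
  rw [sum_powerset_sum_sum_sdiff, nsmul_eq_mul]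
  push_cast
  rfl

theorem abs_sum_sum_erase_inner_le {x : ι → E} {A : Finset ι} {C : ℝ}
    (hC : ∀ S ⊆ A, |⟪∑ i ∈ S, x i, ∑ j ∈ A \ S, x j⟫| ≤ C) :
    |∑ i ∈ A, ∑ j ∈ A.erase i, ⟪x i, x j⟫| ≤ 4 * C := by
  have hC0 : 0 ≤ C := (abs_nonneg _).trans (hC ∅ (empty_subset A))
  have hpow : (2 : ℝ) ^ #A ≤ 2 ^ (#A - 2) * 4 := by
    rw [show (4 : ℝ) = 2 ^ 2 by norm_num, ← pow_add]
    exact pow_le_pow_right₀ one_le_two (by omega)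
  have hsum : (2 : ℝ) ^ (#A - 2) * |∑ i ∈ A, ∑ j ∈ A.erase i, ⟪x i, x j⟫| ≤ 2 ^ #A * C := by
    calc (2 : ℝ) ^ (#A - 2) * |∑ i ∈ A, ∑ j ∈ A.erase i, ⟪x i, x j⟫|
        = |∑ S ∈ A.powerset, ⟪∑ i ∈ S, x i, ∑ j ∈ A \ S, x j⟫| := by
          rw [sum_powerset_inner_sum_sdiff, abs_mul,
            abs_of_pos (by positivity : (0 : ℝ) < 2 ^ (#A - 2))]
      _ ≤ ∑ S ∈ A.powerset, |⟪∑ i ∈ S, x i, ∑ j ∈ A \ S, x j⟫| := abs_sum_le_sum_abs _ _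
      _ ≤ #A.powerset • C := sum_le_card_nsmul _ _ _ fun S hS => hC S (mem_powerset.mp hS)
      _ = 2 ^ #A * C := by rw [card_powerset, nsmul_eq_mul]; push_cast; rfl
  refine le_of_mul_le_mul_left (hsum.trans ?_) (by positivity : (0 : ℝ) < 2 ^ (#A - 2))
  calc (2 : ℝ) ^ #A * C ≤ 2 ^ (#A - 2) * 4 * C := mul_le_mul_of_nonneg_right hpow hC0
    _ = 2 ^ (#A - 2) * (4 * C) := mul_assoc _ _ _

theorem sum_inner_sum_eq_of_subset (x : ι → E) {A B : Finset ι} (hAB : A ⊆ B) :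
    ∑ i ∈ A, ⟪x i, ∑ j ∈ B, x j⟫ =
      ∑ i ∈ A, ‖x i‖ ^ 2 + ∑ i ∈ A, ∑ j ∈ A.erase i, ⟪x i, x j⟫ +
        ⟪∑ i ∈ A, x i, ∑ j ∈ B \ A, x j⟫ := by
  have hdiag : ∑ i ∈ A, ⟪x i, ∑ j ∈ A, x j⟫ =
      ∑ i ∈ A, ‖x i‖ ^ 2 + ∑ i ∈ A, ∑ j ∈ A.erase i, ⟪x i, x j⟫ := by
    rw [← sum_add_distrib]
    refine sum_congr rfl fun i hi => ?_
    rw [inner_sum, ← add_sum_erase A _ hi, real_inner_self_eq_norm_sq]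
  rw [← sum_sdiff hAB, add_comm]
  simp only [inner_add_right, sum_add_distrib, hdiag, sum_inner]

end InnerProductSpace

theorem Real.sqrt_mul_mul_sqrt_mul {k m : ℝ} (d : ℝ) (hk : 0 ≤ k) (hm : 0 ≤ m) :
    √(k * m) * √(m * d) = m * √(k * d) := by
  rw [← Real.sqrt_mul (mul_nonneg hk hm), show k * m * (m * d) = m ^ 2 * (k * d) by ring,
    Real.sqrt_mul (sq_nonneg m), Real.sqrt_sq hm]

theorem Real.mul_sqrt_mul_le_mul_sqrt_mul {k m : ℝ} (d : ℝ) (hk : 0 ≤ k) (hkm : k ≤ m) :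
    k * √(m * d) ≤ m * √(k * d) :=
  calc k * √(m * d) = √(k * k) * √(m * d) := by rw [Real.sqrt_mul_self hk]
    _ ≤ √(k * m) * √(m * d) := by gcongr
    _ = m * √(k * d) := Real.sqrt_mul_mul_sqrt_mul d hk (hk.trans hkm)

theorem Real.natCast_mul_sqrt_le_mul_sqrt_mul {k : ℕ} {m : ℝ} (d : ℝ) (hkm : (k : ℝ) ≤ m) :
    k * √d ≤ m * √(k * d) := by
  have hk : (0 : ℝ) ≤ k := Nat.cast_nonneg k
  have hsqrt : √(k : ℝ) ≤ m := by
    rw [Real.sqrt_le_left (hk.trans hkm)]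
    calc (k : ℝ) ≤ (k : ℝ) ^ 2 := by exact_mod_cast Nat.le_self_pow two_ne_zero k
      _ ≤ m ^ 2 := by gcongr
  calc (k : ℝ) * √d = √k * √(k * d) := by
        rw [Real.sqrt_mul hk, ← mul_assoc, Real.mul_self_sqrt hk]
    _ ≤ m * √(k * d) := by gcongr

namespace Friendly

variable {d n : ℕ} {ε κ : ℝ} {X : Fin n → EuclideanSpace ℝ (Fin d)} {A B S T : Finset (Fin n)}

theorem abs_inner_sum_le (hF : Friendly d n ε κ X) (hεd : ε * n ≤ d) (hB : (#B : ℝ) ≤ ε * n)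
    (hS : S ⊆ B) (hT : T ⊆ B) (hST : Disjoint S T) :
    |⟪∑ i ∈ S, X i, ∑ i ∈ T, X i⟫| ≤ κ * (√(#S * #T) * √(ε * n * d)) := by
  have hm : 0 ≤ ε * n := (Nat.cast_nonneg _).trans hB
  have hcard : ∀ {U : Finset (Fin n)}, U ⊆ B → (#U : ℝ) ≤ ε * n :=
    fun hU => (Nat.cast_le.mpr (card_le_card hU)).trans hB
  have hmax : max √(ε * n * d) (ε * n) = √(ε * n * d) :=
    max_eq_left <| (le_abs_self _).trans <| Real.abs_le_sqrt <| by
      rw [sq]; exact mul_le_mul_of_nonneg_left hεd hm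
  simpa only [hmax] using hF.1 S T hST (hcard hS) (hcard hT)

theorem abs_sum_norm_sq_sub_le (hF : Friendly d n ε κ X) (A : Finset (Fin n)) :
    |∑ i ∈ A, ‖X i‖ ^ 2 - #A * d| ≤ #A * (κ * √d) := by
  rw [← nsmul_eq_mul, ← sum_const, ← sum_sub_distrib, ← nsmul_eq_mul, ← sum_const]
  exact (abs_sum_le_sum_abs _ _).trans (sum_le_sum fun i _ => hF.2.2 i)

theorem abs_sum_sum_erase_inner_le (hF : Friendly d n ε κ X) (hκ : 0 ≤ κ) (hεd : ε * n ≤ d)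
    (hB : (#B : ℝ) ≤ ε * n) (hA : A ⊆ B) :
    |∑ i ∈ A, ∑ j ∈ A.erase i, ⟪X i, X j⟫| ≤ 4 * (κ * (#A * √(ε * n * d))) := by
  refine _root_.abs_sum_sum_erase_inner_le fun S hS => ?_
  refine (hF.abs_inner_sum_le hεd hB (hS.trans hA) (sdiff_subset.trans hA)
    disjoint_sdiff).trans ?_
  calc κ * (√(#S * #(A \ S)) * √(ε * n * d)) ≤ κ * (√(#A * #A) * √(ε * n * d)) := by
        gcongr; exact sdiff_subset
    _ = κ * (#A * √(ε * n * d)) := by rw [Real.sqrt_mul_self (Nat.cast_nonneg _)]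

end Friendly

/-- There is a universal constant `c > 0` such that for any `κ`-friendly
dataset `X₁, …, Xₙ ∈ ℝ^d` with `εn ≤ d`, any `B ⊆ {1, …, n}` of size `εn` with
`R = Σ_{i∈B} Xᵢ`, and any `B′ ⊆ B` of size `k`,
`|Σ_{i∈B′} ⟨Xᵢ, R⟩ − k·d| ≤ c·κ·εn·√(kd)`. -/
theorem null_bad_R_concentration : ∃ c : ℝ, 0 < c ∧
    ∀ (d n : ℕ) (ε κ : ℝ) (X : Fin n → EuclideanSpace ℝ (Fin d)),
      0 < ε → ε ≤ 1 → 0 < κ → Friendly d n ε κ X → ε * n ≤ d →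
      ∀ B : Finset (Fin n), (B.card : ℝ) = ε * n →
      ∀ B' : Finset (Fin n), B' ⊆ B →
        |(∑ i ∈ B', ⟪X i, ∑ j ∈ B, X j⟫) - (B'.card : ℝ) * d| ≤
          c * κ * (ε * n) * Real.sqrt (B'.card * d) := by
  refine ⟨6, by norm_num, ?_⟩
  intro d n ε κ X _ _ hκ hF hεd B hB B' hB'
  have hk : (#B' : ℝ) ≤ ε * n := hB ▸ Nat.cast_le.mpr (card_le_card hB')
  have hrest : (#(B \ B') : ℝ) ≤ ε * n := hB ▸ Nat.cast_le.mpr (card_le_card sdiff_subset)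
  have hdiag := hF.abs_sum_norm_sq_sub_le B'
  have hoff := hF.abs_sum_sum_erase_inner_le hκ.le hεd hB.le hB'
  have hcross := hF.abs_inner_sum_le hεd hB.le hB' sdiff_subset disjoint_sdiff
  have h₁ := Real.natCast_mul_sqrt_le_mul_sqrt_mul d hk
  have h₂ := Real.mul_sqrt_mul_le_mul_sqrt_mul d (Nat.cast_nonneg _) hk
  have h₃ : √(#B' * #(B \ B')) * √(ε * n * d) ≤ ε * n * √(#B' * d) :=
    calc √(#B' * #(B \ B')) * √(ε * n * d) ≤ √(#B' * (ε * n)) * √(ε * n * d) := by gcongr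
      _ = ε * n * √(#B' * d) :=
        Real.sqrt_mul_mul_sqrt_mul d (Nat.cast_nonneg _) ((Nat.cast_nonneg _).trans hk)
  rw [sum_inner_sum_eq_of_subset X hB', add_sub_right_comm, add_sub_right_comm]
  refine (abs_add_three _ _ _).trans ?_
  linarith [mul_le_mul_of_nonneg_left h₁ hκ.le, mul_le_mul_of_nonneg_left h₂ hκ.le,
    mul_le_mul_of_nonneg_left h₃ hκ.le]
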